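/- arXiv:1907.11126 — 5 statements merged into one kernel-verified Lean document; each statement's English description precedes it below -/
import Mathlib

section
/- For all real numbers x ≠ y, the two coefficients λ₁ = (B(y) - B(x))/(x - y) and λ₂ = (B(-x) - B(-y))/(x - y) are nonnegative and satisfy λ₁ + λ₂ = 1, where B is the Bernoulli function. Consequently, for any real numbers c_K and c_L, the quantity λ₁·c_K + λ₂·c_L is a convex combination of c_K and c_L, hence lies between min(c_K, c_L) and max(c_K, c_L). -/
/-- The Bernoulli function `B(u) = u / (exp u - 1)` for `u ≠ 0`, extended by `B 0 = 1`. -/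
noncomputable def bernoulliB (u : ℝ) : ℝ := if u = 0 then 1 else u / (Real.exp u - 1)

/-- auxiliary: the slope function of exp through 0, extended by 1 at 0 -/
noncomputable def bSlope (u : ℝ) : ℝ := if u = 0 then 1 else (Real.exp u - 1) / u

lemma bSlope_pos (u : ℝ) : 0 < bSlope u := by
  unfold bSlope
  rcases eq_or_ne u 0 with rfl | hu
  · simp
  · simp only [hu, if_false]
    rcases lt_or_gt_of_ne hu with h | h
    · have : Real.exp u < 1 := by
        rw [← Real.exp_zero]; exact Real.exp_lt_exp.2 h
      exact div_pos_of_neg_of_neg (by linarith) h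
    · have : 1 < Real.exp u := by
        rw [← Real.exp_zero]; exact Real.exp_lt_exp.2 h
      exact div_pos (by linarith) h

lemma bSlope_strictMono : StrictMono bSlope := by
  intro a b hab
  unfold bSlope
  rcases eq_or_ne a 0 with rfl | ha
  · rw [if_pos rfl, if_neg (ne_of_gt hab)]
    have h := Real.add_one_lt_exp (ne_of_gt hab)
    rw [lt_div_iff₀ hab]; linarith
  · rcases eq_or_ne b 0 with rfl | hb
    · rw [if_pos rfl, if_neg ha]
      have h := Real.add_one_lt_exp ha
      rw [div_lt_iff_of_neg hab]; linarith
    · simp only [if_neg ha, if_neg hb]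
      have := strictConvexOn_exp.secant_strict_mono (a := 0) (Set.mem_univ 0)
        (Set.mem_univ a) (Set.mem_univ b) ha hb hab
      simpa [Real.exp_zero] using this

lemma bernoulliB_eq (u : ℝ) : bernoulliB u = 1 / bSlope u := by
  unfold bernoulliB bSlope
  rcases eq_or_ne u 0 with rfl | hu
  · simp
  · simp only [if_neg hu, one_div_div]

lemma bernoulliB_strictAnti : StrictAnti bernoulliB := by
  intro a b hab
  rw [bernoulliB_eq, bernoulliB_eq]
  exact one_div_lt_one_div_of_lt (bSlope_pos a) (bSlope_strictMono hab)

lemma exp_ne_one_of_ne_zero {u : ℝ} (hu : u ≠ 0) : Real.exp u ≠ 1 := fun h =>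
  hu (Real.exp_injective (by rw [h, Real.exp_zero]))

lemma bernoulliB_neg_sub (u : ℝ) : bernoulliB (-u) - bernoulliB u = u := by
  rcases eq_or_ne u 0 with rfl | hu
  · simp [bernoulliB]
  · have h1 : Real.exp u ≠ 1 := exp_ne_one_of_ne_zero hu
    have h2 : Real.exp (-u) ≠ 1 := exp_ne_one_of_ne_zero (neg_ne_zero.mpr hu)
    have hne : -u ≠ 0 := neg_ne_zero.mpr hu
    unfold bernoulliB
    simp only [if_neg hu, if_neg hne]
    have hpos : (0:ℝ) < Real.exp u := Real.exp_pos u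
    have h1' : Real.exp u - 1 ≠ 0 := sub_ne_zero.mpr h1
    have h2' : Real.exp (-u) - 1 ≠ 0 := sub_ne_zero.mpr h2
    have hexp : Real.exp (-u) = (Real.exp u)⁻¹ := Real.exp_neg u
    rw [hexp] at h2' ⊢
    field_simp at h2' ⊢
    ring_nf

theorem bernoulliB_convex_combination (x y : ℝ) (hxy : x ≠ y) :
    0 ≤ (bernoulliB y - bernoulliB x) / (x - y) ∧
    0 ≤ (bernoulliB (-x) - bernoulliB (-y)) / (x - y) ∧
    (bernoulliB y - bernoulliB x) / (x - y)
      + (bernoulliB (-x) - bernoulliB (-y)) / (x - y) = 1 ∧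
    ∀ cK cL : ℝ,
      min cK cL ≤ (bernoulliB y - bernoulliB x) / (x - y) * cK
          + (bernoulliB (-x) - bernoulliB (-y)) / (x - y) * cL ∧
      (bernoulliB y - bernoulliB x) / (x - y) * cK
          + (bernoulliB (-x) - bernoulliB (-y)) / (x - y) * cL ≤ max cK cL := by
  have hsub : x - y ≠ 0 := sub_ne_zero.mpr hxy
  have h1 : 0 ≤ (bernoulliB y - bernoulliB x) / (x - y) := by
    rcases lt_or_gt_of_ne hxy with h | h
    · have := bernoulliB_strictAnti h
      exact le_of_lt (div_pos_of_neg_of_neg (by linarith) (by linarith))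
    · have := bernoulliB_strictAnti h
      apply div_nonneg <;> linarith
  have h2 : 0 ≤ (bernoulliB (-x) - bernoulliB (-y)) / (x - y) := by
    rcases lt_or_gt_of_ne hxy with h | h
    · have := bernoulliB_strictAnti (neg_lt_neg h)
      exact le_of_lt (div_pos_of_neg_of_neg (by linarith) (by linarith))
    · have := bernoulliB_strictAnti (neg_lt_neg h)
      apply div_nonneg <;> linarith
  have h3 : (bernoulliB y - bernoulliB x) / (x - y)
      + (bernoulliB (-x) - bernoulliB (-y)) / (x - y) = 1 := by
    have hx' := bernoulliB_neg_sub x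
    have hy' := bernoulliB_neg_sub y
    field_simp
    linarith
  refine ⟨h1, h2, h3, fun cK cL => ?_⟩
  set l1 := (bernoulliB y - bernoulliB x) / (x - y)
  set l2 := (bernoulliB (-x) - bernoulliB (-y)) / (x - y)
  constructor
  · have a1 : min cK cL ≤ cK := min_le_left _ _
    have a2 : min cK cL ≤ cL := min_le_right _ _
    have hm : l1 * min cK cL + l2 * min cK cL = min cK cL := by
      rw [← add_mul, h3, one_mul]
    nlinarith [mul_le_mul_of_nonneg_left a1 h1, mul_le_mul_of_nonneg_left a2 h2]
  · have a1 : cK ≤ max cK cL := le_max_left _ _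
    have a2 : cL ≤ max cK cL := le_max_right _ _
    have hm : l1 * max cK cL + l2 * max cK cL = max cK cL := by
      rw [← add_mul, h3, one_mul]
    nlinarith [mul_le_mul_of_nonneg_left a1 h1, mul_le_mul_of_nonneg_left a2 h2]
end

section
/- (Face concentration bound, Bessemoulin-Chatard flux.) Let c_K, c_L ∈ (0,1) and Φ_K, Φ_L ∈ ℝ. Define dr(c_K, c_L) = (h(c_K) - h(c_L)) / (log(c_K) - log(c_L)) if c_K ≠ c_L, and dr(c_K, c_K) = 1/(1 - c_K). Define the Bessemoulin-Chatard flux F = dr(c_K,c_L)·( B((Φ_L - Φ_K)/dr(c_K,c_L))·c_K - B((Φ_K - Φ_L)/dr(c_K,c_L))·c_L ). If h(c_K) + Φ_K ≠ h(c_L) + Φ_L, then the face concentration C = F / (h(c_K) + Φ_K - h(c_L) - Φ_L) satisfies min(c_K, c_L) ≤ C ≤ max(c_K, c_L). -/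
/-- The chemical potential `h(c) = log (c / (1-c))`. -/
noncomputable def hF (c : ℝ) : ℝ := Real.log (c / (1 - c))

/-- The Bessemoulin-Chatard face diffusion coefficient. -/
noncomputable def drF (cK cL : ℝ) : ℝ :=
  if cK = cL then 1 / (1 - cK) else (hF cK - hF cL) / (Real.log cK - Real.log cL)

open Real intervalIntegral

/-- `g u = (exp u - 1)/u`, the reciprocal of the Bernoulli function. -/
noncomputable def gB (u : ℝ) : ℝ := if u = 0 then 1 else (Real.exp u - 1) / u

lemma gB_eq_integral (u : ℝ) : gB u = ∫ t in (0:ℝ)..1, Real.exp (t * u) := by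
  rcases eq_or_ne u 0 with h | h
  · simp [gB, h]
  · rw [gB, if_neg h, intervalIntegral.integral_comp_mul_right (fun x => Real.exp x) h]
    simp [integral_exp, smul_eq_mul, div_eq_inv_mul]

lemma gB_mono : Monotone gB := by
  intro u v huv
  rw [gB_eq_integral, gB_eq_integral]
  apply intervalIntegral.integral_mono_on zero_le_one
  · exact (Real.continuous_exp.comp (continuous_id.mul continuous_const)).intervalIntegrable _ _
  · exact (Real.continuous_exp.comp (continuous_id.mul continuous_const)).intervalIntegrable _ _
  · intro t ht
    exact Real.exp_le_exp.2 (mul_le_mul_of_nonneg_left huv ht.1)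

lemma gB_pos (u : ℝ) : 0 < gB u := by
  rw [gB_eq_integral]
  apply intervalIntegral.intervalIntegral_pos_of_pos_on
  · exact (Real.continuous_exp.comp (continuous_id.mul continuous_const)).intervalIntegrable _ _
  · intro t _; exact Real.exp_pos _
  · norm_num

lemma gB_neg_eq (u : ℝ) : gB (-u) = Real.exp (-u) * gB u := by
  rcases eq_or_ne u 0 with h | h
  · simp [gB, h]
  · rw [gB, gB, if_neg (neg_ne_zero.2 h), if_neg h, Real.exp_neg]
    have := Real.exp_ne_zero u
    field_simp
    ring

/-- exponential mean -/
noncomputable def eM (x y : ℝ) : ℝ := Real.exp y * gB (x - y)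

lemma eM_pos (x y : ℝ) : 0 < eM x y := mul_pos (Real.exp_pos _) (gB_pos _)

lemma eM_symm (x y : ℝ) : eM x y = eM y x := by
  rw [eM, eM, show y - x = -(x - y) by ring, gB_neg_eq, ← mul_assoc, ← Real.exp_add]
  ring_nf

lemma eM_mono_left {x x' : ℝ} (h : x ≤ x') (y : ℝ) : eM x y ≤ eM x' y :=
  mul_le_mul_of_nonneg_left (gB_mono (by linarith)) (Real.exp_pos _).le

lemma eM_shift (x y c : ℝ) : eM (x + c) (y + c) = Real.exp c * eM x y := by
  rw [eM, eM, show x + c - (y + c) = x - y by ring, Real.exp_add]; ring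

lemma eM_of_ne {x y : ℝ} (h : x ≠ y) : eM x y = (Real.exp x - Real.exp y) / (x - y) := by
  rw [eM, gB, if_neg (sub_ne_zero.2 h), Real.exp_sub]
  have hxy : x - y ≠ 0 := sub_ne_zero.2 h
  have he := Real.exp_ne_zero y
  field_simp

/-- key bound lemmas -/
lemma eM_upper (s a b : ℝ) : Real.exp a * eM s b ≤ max (Real.exp a) (Real.exp b) * eM s a := by
  rcases le_total a b with h | h
  · have h1 : eM s b ≤ eM (s + (b - a)) b := eM_mono_left (by linarith) b
    have h2 : eM (s + (b - a)) b = Real.exp (b - a) * eM s a := by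
      have := eM_shift s a (b - a); rwa [show a + (b - a) = b by ring] at this
    rw [max_eq_right (Real.exp_le_exp.2 h)]
    calc Real.exp a * eM s b ≤ Real.exp a * (Real.exp (b - a) * eM s a) :=
          mul_le_mul_of_nonneg_left (h2 ▸ h1) (Real.exp_pos _).le
      _ = Real.exp b * eM s a := by rw [← mul_assoc, ← Real.exp_add]; ring_nf
  · rw [max_eq_left (Real.exp_le_exp.2 h)]
    exact mul_le_mul_of_nonneg_left
      (by rw [eM_symm s b, eM_symm s a]; exact eM_mono_left h s) (Real.exp_pos _).le

lemma eM_lower (s a b : ℝ) : min (Real.exp a) (Real.exp b) * eM s a ≤ Real.exp a * eM s b := by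
  rcases le_total a b with h | h
  · rw [min_eq_left (Real.exp_le_exp.2 h)]
    exact mul_le_mul_of_nonneg_left
      (by rw [eM_symm s a, eM_symm s b]; exact eM_mono_left h s) (Real.exp_pos _).le
  · have h1 : eM s a ≤ eM (s + (a - b)) a := eM_mono_left (by linarith) a
    have h2 : eM (s + (a - b)) a = Real.exp (a - b) * eM s b := by
      have := eM_shift s b (a - b); rwa [show b + (a - b) = a by ring] at this
    rw [min_eq_right (Real.exp_le_exp.2 h)]
    calc Real.exp b * eM s a ≤ Real.exp b * (Real.exp (a - b) * eM s b) :=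
          mul_le_mul_of_nonneg_left (h2 ▸ h1) (Real.exp_pos _).le
      _ = Real.exp a * eM s b := by rw [← mul_assoc, ← Real.exp_add]; ring_nf

lemma bernoulliB_eq_inv_gB (u : ℝ) : bernoulliB u = (gB u)⁻¹ := by
  rcases eq_or_ne u 0 with h | h
  · simp [bernoulliB, gB, h]
  · rw [bernoulliB, gB, if_neg h, if_neg h, inv_div]

lemma hF_eq {c : ℝ} (hc : c ∈ Set.Ioo (0:ℝ) 1) :
    hF c = Real.log c - Real.log (1 - c) := by
  rw [hF, Real.log_div (ne_of_gt hc.1) (ne_of_gt (by linarith [hc.2]))]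

lemma drF_pos {cK cL : ℝ} (hK : cK ∈ Set.Ioo (0:ℝ) 1) (hL : cL ∈ Set.Ioo (0:ℝ) 1) :
    0 < drF cK cL := by
  obtain ⟨hK0, hK1⟩ := hK; obtain ⟨hL0, hL1⟩ := hL
  rcases eq_or_ne cK cL with h | h
  · rw [drF, if_pos h]
    have : (0:ℝ) < 1 - cK := by linarith
    positivity
  · rw [drF, if_neg h, hF_eq ⟨hK0, hK1⟩, hF_eq ⟨hL0, hL1⟩]
    rcases lt_or_gt_of_ne h with hlt | hlt
    · have l1 : Real.log cK < Real.log cL := Real.log_lt_log hK0 hlt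
      have l2 : Real.log (1 - cL) < Real.log (1 - cK) :=
        Real.log_lt_log (by linarith) (by linarith)
      exact div_pos_of_neg_of_neg (by linarith) (by linarith)
    · have l1 : Real.log cL < Real.log cK := Real.log_lt_log hL0 hlt
      have l2 : Real.log (1 - cK) < Real.log (1 - cL) :=
        Real.log_lt_log (by linarith) (by linarith)
      exact div_pos (by linarith) (by linarith)

lemma drF_mul_log {cK cL : ℝ} (hK : cK ∈ Set.Ioo (0:ℝ) 1) (hL : cL ∈ Set.Ioo (0:ℝ) 1) :
    drF cK cL * (Real.log cK - Real.log cL) = hF cK - hF cL := by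
  rcases eq_or_ne cK cL with h | h
  · subst h; simp
  · have hlog : Real.log cK - Real.log cL ≠ 0 := by
      rcases lt_or_gt_of_ne h with hlt | hlt
      · exact ne_of_lt (by linarith [Real.log_lt_log hK.1 hlt])
      · exact ne_of_gt (by linarith [Real.log_lt_log hL.1 hlt])
    rw [drF, if_neg h, div_mul_cancel₀ _ hlog]

theorem bessemoulinChatard_face_concentration_bounds (cK cL ΦK ΦL : ℝ)
    (hK : cK ∈ Set.Ioo (0 : ℝ) 1) (hL : cL ∈ Set.Ioo (0 : ℝ) 1)
    (hne : hF cK + ΦK ≠ hF cL + ΦL) :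
    min cK cL ≤
        (drF cK cL * (bernoulliB ((ΦL - ΦK) / drF cK cL) * cK
          - bernoulliB ((ΦK - ΦL) / drF cK cL) * cL))
        / (hF cK + ΦK - hF cL - ΦL) ∧
    (drF cK cL * (bernoulliB ((ΦL - ΦK) / drF cK cL) * cK
          - bernoulliB ((ΦK - ΦL) / drF cK cL) * cL))
        / (hF cK + ΦK - hF cL - ΦL) ≤ max cK cL := by
  set dr := drF cK cL with hdr
  have hdrpos : 0 < dr := drF_pos hK hL
  set a := Real.log cK with ha
  set b := Real.log cL with hb
  set u := (ΦK - ΦL) / dr with hu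
  set s := a + u with hs
  have hexpa : Real.exp a = cK := Real.exp_log hK.1
  have hexpb : Real.exp b = cL := Real.exp_log hL.1
  have hD : hF cK + ΦK - hF cL - ΦL = dr * (s - b) := by
    have h1 : dr * (a - b) = hF cK - hF cL := drF_mul_log hK hL
    have h2 : dr * u = ΦK - ΦL := mul_div_cancel₀ _ (ne_of_gt hdrpos)
    have : dr * (s - b) = dr * (a - b) + dr * u := by ring
    rw [this, h1, h2]; ring
  have hDne : hF cK + ΦK - hF cL - ΦL ≠ 0 := sub_ne_zero.2 (by
    intro h; exact hne (by linarith))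
  have hsb : s ≠ b := by
    intro h
    apply hDne
    rw [hD, h]; ring
  have hneg : (ΦL - ΦK) / dr = -u := by rw [hu, ← neg_div]; ring_nf
  -- the flux rewrites
  have hBu : bernoulliB (-u) * cK - bernoulliB u * cL
      = (gB u)⁻¹ * (Real.exp s - Real.exp b) := by
    rw [bernoulliB_eq_inv_gB, bernoulliB_eq_inv_gB, gB_neg_eq, mul_inv,
      Real.exp_neg, inv_inv, hexpb, ← hexpa, hs, Real.exp_add]
    ring
  have heMsa : eM s a = cK * gB u := by
    rw [eM, hs, add_sub_cancel_left, hexpa]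
  have hC : (dr * (bernoulliB ((ΦL - ΦK) / dr) * cK - bernoulliB ((ΦK - ΦL) / dr) * cL))
      / (hF cK + ΦK - hF cL - ΦL) = cK * eM s b / eM s a := by
    rw [hneg, ← hu, hBu, hD, heMsa, eM_of_ne hsb]
    have h1 : dr ≠ 0 := ne_of_gt hdrpos
    have h2 : s - b ≠ 0 := sub_ne_zero.2 hsb
    have h3 : gB u ≠ 0 := ne_of_gt (gB_pos u)
    have h4 : cK ≠ 0 := ne_of_gt hK.1
    field_simp
  rw [← hdr] at *
  rw [hC, ← hexpa, ← hexpb]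
  constructor
  · rw [le_div_iff₀ (eM_pos s a)]
    exact eM_lower s a b
  · rw [div_le_iff₀ (eM_pos s a)]
    exact eM_upper s a b
end

section
/- (Face concentration lower bound, activity based flux.) Let c_K, c_L ∈ (0,1) and Φ_K, Φ_L ∈ ℝ, and define the activity based flux F = ((β(c_K) + β(c_L))/2)·( B(Φ_L - Φ_K)·a(c_K) - B(Φ_K - Φ_L)·a(c_L) ), where a(c) = c/(1-c) and β(c) = 1 - c. If h(c_K) + Φ_K ≠ h(c_L) + Φ_L, then the face concentration C = F / (h(c_K) + Φ_K - h(c_L) - Φ_L) satisfies C ≥ min(c_K, c_L)/2 > 0. -/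
/-- The activity `a(c) = c / (1-c)`. -/
noncomputable def aF (c : ℝ) : ℝ := c / (1 - c)

/-- The inverse activity coefficient `β(c) = 1 - c`. -/
noncomputable def betaF (c : ℝ) : ℝ := 1 - c

lemma exp_sub_one_ne_zero {u : ℝ} (hu : u ≠ 0) : Real.exp u - 1 ≠ 0 := by
  intro h
  have : Real.exp u = Real.exp 0 := by rw [Real.exp_zero]; linarith
  exact hu (Real.exp_injective this)

lemma bernoulliB_pos (u : ℝ) : 0 < bernoulliB u := by
  unfold bernoulliB
  split_ifs with h
  · norm_num
  · rcases lt_or_gt_of_ne h with h' | h'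
    · apply div_pos_of_neg_of_neg h'
      have : Real.exp u < Real.exp 0 := Real.exp_lt_exp.mpr h'
      rw [Real.exp_zero] at this; linarith
    · apply div_pos h'
      have : Real.exp 0 < Real.exp u := Real.exp_lt_exp.mpr h'
      rw [Real.exp_zero] at this; linarith

lemma bernoulliB_mul_slope {u : ℝ} (hu : u ≠ 0) :
    bernoulliB u * ((Real.exp u - 1) / u) = 1 := by
  unfold bernoulliB
  rw [if_neg hu]
  field_simp [exp_sub_one_ne_zero hu]

lemma bernoulliB_neg (u : ℝ) : bernoulliB (-u) = Real.exp u * bernoulliB u := by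
  unfold bernoulliB
  by_cases h : u = 0
  · simp [h]
  · rw [if_neg (neg_ne_zero.mpr h), if_neg h, Real.exp_neg]
    have h1 := exp_sub_one_ne_zero h
    have h2 : (Real.exp u)⁻¹ - 1 ≠ 0 := by
      intro hh
      have : Real.exp (-u) - 1 = 0 := by rw [Real.exp_neg]; exact hh
      exact exp_sub_one_ne_zero (neg_ne_zero.mpr h) this
    have h3 : Real.exp u ≠ 0 := (Real.exp_pos u).ne'
    have h4 : (Real.exp u)⁻¹ - 1 = -(Real.exp u - 1) / Real.exp u := by field_simp; ring
    rw [h4, div_div_eq_mul_div, neg_mul, neg_div_neg_eq]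
    ring

/-- Key secant inequality 1: for `s ≥ 0`, `s ≠ u`, `B(u) * slope_exp(u, s) ≥ 1`. -/
lemma key1 {u s : ℝ} (hs : 0 ≤ s) (hne : s ≠ u) :
    1 ≤ bernoulliB u * ((Real.exp s - Real.exp u) / (s - u)) := by
  by_cases hu : u = 0
  · subst hu
    have hspos : 0 < s := lt_of_le_of_ne hs (Ne.symm hne)
    have : 1 ≤ (Real.exp s - Real.exp 0) / (s - 0) := by
      rw [Real.exp_zero, sub_zero, le_div_iff₀ hspos]
      have := Real.add_one_le_exp s
      linarith
    simpa [bernoulliB] using this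
  · have hsec : (Real.exp 0 - Real.exp u) / (0 - u) ≤ (Real.exp s - Real.exp u) / (s - u) :=
      convexOn_exp.secant_mono (Set.mem_univ u) (Set.mem_univ 0) (Set.mem_univ s)
        (Ne.symm hu) hne hs
    have h0 : (Real.exp 0 - Real.exp u) / (0 - u) = (Real.exp u - 1) / u := by
      rw [Real.exp_zero]; rw [zero_sub, div_neg, ← neg_div, neg_sub]
    rw [h0] at hsec
    calc 1 = bernoulliB u * ((Real.exp u - 1) / u) := (bernoulliB_mul_slope hu).symm
      _ ≤ bernoulliB u * ((Real.exp s - Real.exp u) / (s - u)) :=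
        mul_le_mul_of_nonneg_left hsec (bernoulliB_pos u).le

/-- Key secant inequality 2: for `u ≤ v`, `v ≠ 0`, `B(u) * slope_exp(0, v) ≥ 1`. -/
lemma key2 {u v : ℝ} (huv : u ≤ v) (hv : v ≠ 0) :
    1 ≤ bernoulliB u * ((Real.exp v - 1) / v) := by
  by_cases hu : u = 0
  · subst hu
    have hvpos : 0 < v := lt_of_le_of_ne huv (Ne.symm hv)
    have : 1 ≤ (Real.exp v - 1) / v := by
      rw [le_div_iff₀ hvpos]
      have := Real.add_one_le_exp v
      linarith
    simpa [bernoulliB] using this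
  · have hsec : (Real.exp u - Real.exp 0) / (u - 0) ≤ (Real.exp v - Real.exp 0) / (v - 0) :=
      convexOn_exp.secant_mono (Set.mem_univ 0) (Set.mem_univ u) (Set.mem_univ v) hu hv huv
    rw [Real.exp_zero, sub_zero, sub_zero] at hsec
    calc 1 = bernoulliB u * ((Real.exp u - 1) / u) := (bernoulliB_mul_slope hu).symm
      _ ≤ bernoulliB u * ((Real.exp v - 1) / v) :=
        mul_le_mul_of_nonneg_left hsec (bernoulliB_pos u).le

/-- Core inequality: activity logarithmic-mean type bound. -/
lemma core {x y u : ℝ} (hx : 0 < x) (hy : 0 < y)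
    (hδ : Real.log x - Real.log y - u ≠ 0) :
    min x y ≤ bernoulliB u * (x - Real.exp u * y) / (Real.log x - Real.log y - u) := by
  set δ := Real.log x - Real.log y - u with hδdef
  rcases le_total y x with hyx | hxy
  · -- min = y ; s = log x - log y ≥ 0
    set s := Real.log x - Real.log y with hsdef
    have hs : 0 ≤ s := sub_nonneg.mpr (Real.log_le_log hy hyx)
    have hes : Real.exp s = x / y := by
      rw [hsdef, Real.exp_sub, Real.exp_log hx, Real.exp_log hy]
    have hxe : x = y * Real.exp s := by
      rw [hes]; field_simp
    have hsu : s ≠ u := by intro h; apply hδ; rw [hδdef, h, sub_self]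
    have hk := key1 hs hsu
    have : bernoulliB u * (x - Real.exp u * y) / δ
        = y * (bernoulliB u * ((Real.exp s - Real.exp u) / (s - u))) := by
      rw [hδdef, hxe]
      try ring
    rw [this, min_eq_right hyx]
    calc y = y * 1 := (mul_one y).symm
      _ ≤ y * (bernoulliB u * ((Real.exp s - Real.exp u) / (s - u))) :=
        mul_le_mul_of_nonneg_left hk hy.le
  · -- min = x ; v = u + log y - log x ≥ u
    set v := u + (Real.log y - Real.log x) with hvdef
    have huv : u ≤ v := by
      have : 0 ≤ Real.log y - Real.log x := sub_nonneg.mpr (Real.log_le_log hx hxy)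
      rw [hvdef]; linarith
    have hv0 : v ≠ 0 := by intro h; apply hδ; rw [hδdef]; rw [hvdef] at h; linarith
    have hev : x * Real.exp v = Real.exp u * y := by
      rw [hvdef, Real.exp_add, Real.exp_sub, Real.exp_log hx, Real.exp_log hy]
      field_simp
      try ring
    have hδv : δ = -v := by rw [hδdef, hvdef]; ring
    have hk := key2 huv hv0
    have : bernoulliB u * (x - Real.exp u * y) / δ
        = x * (bernoulliB u * ((Real.exp v - 1) / v)) := by
      rw [hδv, ← hev, div_neg]
      ring
    rw [this, min_eq_left hxy]
    calc x = x * 1 := (mul_one x).symm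
      _ ≤ x * (bernoulliB u * ((Real.exp v - 1) / v)) :=
        mul_le_mul_of_nonneg_left hk hx.le

theorem activity_face_concentration_lower_bound (cK cL ΦK ΦL : ℝ)
    (hK : cK ∈ Set.Ioo (0 : ℝ) 1) (hL : cL ∈ Set.Ioo (0 : ℝ) 1)
    (hne : hF cK + ΦK ≠ hF cL + ΦL) :
    min cK cL / 2 ≤
        (((betaF cK + betaF cL) / 2)
          * (bernoulliB (ΦL - ΦK) * aF cK - bernoulliB (ΦK - ΦL) * aF cL))
        / (hF cK + ΦK - hF cL - ΦL) ∧
    0 < min cK cL / 2 := by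
  obtain ⟨hK0, hK1⟩ := hK
  obtain ⟨hL0, hL1⟩ := hL
  have hbK : 0 < 1 - cK := by linarith
  have hbL : 0 < 1 - cL := by linarith
  have haK : 0 < aF cK := div_pos hK0 hbK
  have haL : 0 < aF cL := div_pos hL0 hbL
  set u := ΦL - ΦK with hu
  have hBneg : bernoulliB (ΦK - ΦL) = Real.exp u * bernoulliB u := by
    have : ΦK - ΦL = -u := by rw [hu]; ring
    rw [this, bernoulliB_neg]
  have hhK : hF cK = Real.log (aF cK) := rfl
  have hhL : hF cL = Real.log (aF cL) := rfl
  have hδeq : hF cK + ΦK - hF cL - ΦL = Real.log (aF cK) - Real.log (aF cL) - u := by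
    rw [hhK, hhL, hu]; ring
  have hδ : Real.log (aF cK) - Real.log (aF cL) - u ≠ 0 := by
    rw [← hδeq]
    intro h; apply hne; linarith
  have hcore := core haK haL hδ
  -- rewrite numerator
  have hnum : bernoulliB (ΦL - ΦK) * aF cK - bernoulliB (ΦK - ΦL) * aF cL
      = bernoulliB u * (aF cK - Real.exp u * aF cL) := by
    rw [← hu, hBneg]; ring
  have hcKa : (1 - cK) * aF cK = cK := by
    unfold aF; field_simp
  have hcLa : (1 - cL) * aF cL = cL := by
    unfold aF; field_simp
  have hmin : min cK cL ≤ (betaF cK + betaF cL) * min (aF cK) (aF cL) := by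
    unfold betaF
    rcases le_total (aF cK) (aF cL) with h | h
    · rw [min_eq_left h]
      have : min cK cL ≤ cK := min_le_left _ _
      nlinarith
    · rw [min_eq_right h]
      have : min cK cL ≤ cL := min_le_right _ _
      nlinarith
  constructor
  · have hfac : 0 < (betaF cK + betaF cL) / 2 := by unfold betaF; linarith
    have hgoal : (((betaF cK + betaF cL) / 2)
          * (bernoulliB (ΦL - ΦK) * aF cK - bernoulliB (ΦK - ΦL) * aF cL))
        / (hF cK + ΦK - hF cL - ΦL)
        = ((betaF cK + betaF cL) / 2)
          * (bernoulliB u * (aF cK - Real.exp u * aF cL)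
              / (Real.log (aF cK) - Real.log (aF cL) - u)) := by
      rw [hnum, hδeq, mul_div_assoc]
    rw [hgoal]
    calc min cK cL / 2 ≤ ((betaF cK + betaF cL) * min (aF cK) (aF cL)) / 2 := by linarith
      _ = ((betaF cK + betaF cL) / 2) * min (aF cK) (aF cL) := by ring
      _ ≤ ((betaF cK + betaF cL) / 2)
          * (bernoulliB u * (aF cK - Real.exp u * aF cL)
              / (Real.log (aF cK) - Real.log (aF cL) - u)) :=
        mul_le_mul_of_nonneg_left hcore hfac.le
  · have : 0 < min cK cL := lt_min hK0 hL0
    linarith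
end

section
/- For all distinct c_K, c_L ∈ (0,1), the quotient C̃(c_K, c_L) = (r(c_K) - r(c_L)) / (h(c_K) - h(c_L)) satisfies min(c_K, c_L) ≤ C̃(c_K, c_L) ≤ max(c_K, c_L), where r(c) = -log(1-c) and h(c) = log(c/(1-c)). -/
/-- The diffusion enhancement `r(c) = -log(1-c)`. -/
noncomputable def rF (c : ℝ) : ℝ := - Real.log (1 - c)

lemma hF_hasDerivAt {x : ℝ} (hx : x ∈ Set.Ioo (0:ℝ) 1) :
    HasDerivAt hF (1 / (x * (1 - x))) x := by
  obtain ⟨h0, h1⟩ := hx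
  have h1' : (1 : ℝ) - x ≠ 0 := by linarith
  have hinner : HasDerivAt (fun y : ℝ => y / (1 - y)) (1 / (1 - x) ^ 2) x := by
    have := (hasDerivAt_id x).div ((hasDerivAt_id x).const_sub 1) h1'
    refine this.congr_deriv ?_
    simp only [id]; field_simp; ring
  have hne : x / (1 - x) ≠ 0 := by positivity
  have := hinner.log hne
  refine this.congr_deriv ?_
  field_simp

lemma rF_hasDerivAt {x : ℝ} (hx : x ∈ Set.Ioo (0:ℝ) 1) :
    HasDerivAt rF (1 / (1 - x)) x := by
  obtain ⟨h0, h1⟩ := hx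
  have h1' : (1 : ℝ) - x ≠ 0 := by linarith
  have : HasDerivAt (fun y : ℝ => Real.log (1 - y)) ((-1) / (1 - x)) x :=
    ((hasDerivAt_id x).const_sub 1).log h1'
  have := this.neg
  refine this.congr_deriv ?_
  ring

lemma hF_strictMono {a b : ℝ} (ha : a ∈ Set.Ioo (0:ℝ) 1) (hb : b ∈ Set.Ioo (0:ℝ) 1)
    (hab : a < b) : hF a < hF b := by
  obtain ⟨ha0, ha1⟩ := ha
  obtain ⟨hb0, hb1⟩ := hb
  apply Real.log_lt_log (div_pos ha0 (by linarith))
  rw [div_lt_div_iff₀ (by linarith) (by linarith)]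
  nlinarith

lemma ratio_mem {a b : ℝ} (ha : a ∈ Set.Ioo (0:ℝ) 1) (hb : b ∈ Set.Ioo (0:ℝ) 1)
    (hab : a < b) : ∃ c ∈ Set.Ioo a b, (rF b - rF a) / (hF b - hF a) = c := by
  have hsub : Set.Icc a b ⊆ Set.Ioo (0:ℝ) 1 := fun x hx =>
    ⟨lt_of_lt_of_le ha.1 hx.1, lt_of_le_of_lt hx.2 hb.2⟩
  have hsub' : Set.Ioo a b ⊆ Set.Ioo (0:ℝ) 1 := fun x hx =>
    hsub ⟨le_of_lt hx.1, le_of_lt hx.2⟩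
  obtain ⟨c, hc, heq⟩ := exists_ratio_hasDerivAt_eq_ratio_slope rF
    (fun x => 1 / (1 - x)) hab
    (fun x hx => (rF_hasDerivAt (hsub hx)).continuousAt.continuousWithinAt)
    (fun x hx => rF_hasDerivAt (hsub' hx))
    hF (fun x => 1 / (x * (1 - x)))
    (fun x hx => (hF_hasDerivAt (hsub hx)).continuousAt.continuousWithinAt)
    (fun x hx => hF_hasDerivAt (hsub' hx))
  refine ⟨c, hc, ?_⟩
  obtain ⟨hc0, hc1⟩ := hsub' hc
  have hden : hF b - hF a ≠ 0 := sub_ne_zero.mpr (hF_strictMono ha hb hab).ne'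
  have h1c : (1:ℝ) - c ≠ 0 := by linarith
  rw [div_eq_iff hden]
  field_simp at heq
  nlinarith [heq]

theorem tilde_face_concentration_bounds (cK cL : ℝ)
    (hK : cK ∈ Set.Ioo (0 : ℝ) 1) (hL : cL ∈ Set.Ioo (0 : ℝ) 1) (hne : cK ≠ cL) :
    min cK cL ≤ (rF cK - rF cL) / (hF cK - hF cL) ∧
    (rF cK - rF cL) / (hF cK - hF cL) ≤ max cK cL := by
  rcases lt_or_gt_of_ne hne with h | h
  · obtain ⟨c, hc, heq⟩ := ratio_mem hK hL h
    have : (rF cK - rF cL) / (hF cK - hF cL) = (rF cL - rF cK) / (hF cL - hF cK) := by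
      rw [← neg_div_neg_eq]; ring_nf
    rw [this, heq]
    constructor
    · exact le_trans (min_le_left _ _) hc.1.le
    · exact le_trans hc.2.le (le_max_right _ _)
  · obtain ⟨c, hc, heq⟩ := ratio_mem hL hK h
    rw [heq]
    constructor
    · exact le_trans (min_le_right _ _) hc.1.le
    · exact le_trans hc.2.le (le_max_left _ _)
end

section
/- (Comparison of face concentrations, centered scheme.) For all distinct c_K, c_L ∈ (0,1) and all Φ_K, Φ_L ∈ ℝ, one has C̃(c_K, c_L) / ((c_K + c_L)/2) ≤ 2, where C̃(c_K, c_L) = (r(c_K) - r(c_L))/(h(c_K) - h(c_L)) with r(c) = -log(1-c) and h(c) = log(c/(1-c)). In other words, the bound of Lemma on comparison of face concentration functionals holds for the centered scheme with constant G = 2. -/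
lemma hasDerivAt_rF {c : ℝ} (h1 : c < 1) : HasDerivAt rF (1 / (1 - c)) c := by
  have hne : (1 : ℝ) - c ≠ 0 := by linarith
  have hlin : HasDerivAt (fun x : ℝ => 1 - x) (-1) c := by
    simpa using (hasDerivAt_id c).const_sub 1
  have hlog := (Real.hasDerivAt_log hne).comp c hlin
  have := hlog.neg
  exact this.congr_deriv (by ring)

lemma hasDerivAt_hF {c : ℝ} (h0 : 0 < c) (h1 : c < 1) :
    HasDerivAt hF (1 / (c * (1 - c))) c := by
  have hne : (1 : ℝ) - c ≠ 0 := by linarith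
  have hlin : HasDerivAt (fun x : ℝ => 1 - x) (-1) c := by
    simpa using (hasDerivAt_id c).const_sub 1
  have hlog2 := (Real.hasDerivAt_log hne).comp c hlin
  have hlog1 := Real.hasDerivAt_log (ne_of_gt h0)
  have hsum := hlog1.sub hlog2
  have heq : hF =ᶠ[nhds c] fun x => Real.log x - Real.log (1 - x) := by
    have hmem : Set.Ioo (0 : ℝ) 1 ∈ nhds c := isOpen_Ioo.mem_nhds ⟨h0, h1⟩
    filter_upwards [hmem] with x hx
    have hx0 : (0 : ℝ) < x := hx.1
    have hx1 : (0 : ℝ) < 1 - x := by linarith [hx.2]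
    simp [hF, Real.log_div (ne_of_gt hx0) (ne_of_gt hx1)]
  have hres : HasDerivAt hF (c⁻¹ - (1 - c)⁻¹ * (-1)) c :=
    hsum.congr_of_eventuallyEq heq
  convert hres using 1
  field_simp
  ring

lemma aux_ratio {a b : ℝ} (ha : a ∈ Set.Ioo (0 : ℝ) 1) (hb : b ∈ Set.Ioo (0 : ℝ) 1)
    (hab : a < b) : ((rF b - rF a) / (hF b - hF a)) / ((a + b) / 2) ≤ 2 := by
  obtain ⟨ha0, ha1⟩ := ha
  obtain ⟨hb0, hb1⟩ := hb
  -- differentiability on Ioo a b, continuity on Icc a b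
  have hrd : ∀ x ∈ Set.Ioo a b, HasDerivAt rF (1 / (1 - x)) x := fun x hx =>
    hasDerivAt_rF (lt_trans hx.2 hb1)
  have hhd : ∀ x ∈ Set.Ioo a b, HasDerivAt hF (1 / (x * (1 - x))) x := fun x hx =>
    hasDerivAt_hF (lt_trans ha0 hx.1) (lt_trans hx.2 hb1)
  have hrc : ContinuousOn rF (Set.Icc a b) := fun x hx =>
    (hasDerivAt_rF (lt_of_le_of_lt hx.2 hb1)).continuousAt.continuousWithinAt
  have hhc : ContinuousOn hF (Set.Icc a b) := fun x hx =>
    (hasDerivAt_hF (lt_of_lt_of_le ha0 hx.1) (lt_of_le_of_lt hx.2 hb1)).continuousAt.continuousWithinAt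
  obtain ⟨c, hc, hceq⟩ := exists_ratio_hasDerivAt_eq_ratio_slope rF
    (fun x => 1 / (1 - x)) hab hrc hrd hF (fun x => 1 / (x * (1 - x))) hhc hhd
  -- hceq : (hF b - hF a) * (1/(1-c)) = (rF b - rF a) * (1/(c*(1-c)))
  have hc0 : 0 < c := lt_trans ha0 hc.1
  have hc1 : c < 1 := lt_trans hc.2 hb1
  have h1c : (0 : ℝ) < 1 - c := by linarith
  -- r b - r a > 0
  have hr_pos : 0 < rF b - rF a := by
    have h1b : (0 : ℝ) < 1 - b := by linarith
    have h1a : (0 : ℝ) < 1 - a := by linarith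
    have : Real.log (1 - b) < Real.log (1 - a) :=
      Real.log_lt_log h1b (by linarith)
    simp only [rF]; linarith
  -- from hceq: c * (hF b - hF a) = rF b - rF a
  have key : c * (hF b - hF a) = rF b - rF a := by
    have hc' : c ≠ 0 := ne_of_gt hc0
    have h1c' : (1 : ℝ) - c ≠ 0 := ne_of_gt h1c
    field_simp at hceq
    nlinarith [hceq]
  have hh_pos : 0 < hF b - hF a := by
    rcases lt_trichotomy (hF b - hF a) 0 with h | h | h
    · nlinarith
    · rw [h] at key; simp at key; linarith
    · exact h
  have hratio : (rF b - rF a) / (hF b - hF a) = c := by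
    rw [← key]; field_simp
  rw [hratio]
  have hab2 : 0 < (a + b) / 2 := by linarith
  rw [div_le_iff₀ hab2]
  linarith [hc.2]

theorem centered_face_concentration_comparison (cK cL ΦK ΦL : ℝ)
    (hK : cK ∈ Set.Ioo (0 : ℝ) 1) (hL : cL ∈ Set.Ioo (0 : ℝ) 1) (hne : cK ≠ cL) :
    ((rF cK - rF cL) / (hF cK - hF cL)) / ((cK + cL) / 2) ≤ 2 := by
  rcases lt_or_gt_of_ne hne with h | h
  · have := aux_ratio hK hL h
    have hsym : (rF cL - rF cK) / (hF cL - hF cK)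
        = (rF cK - rF cL) / (hF cK - hF cL) := by
      rw [← neg_sub (rF cK), ← neg_sub (hF cK), neg_div_neg_eq]
    rw [hsym] at this
    convert this using 3 <;> ring
  · have := aux_ratio hL hK h
    convert this using 3 <;> ring
end
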